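/- Let A and B be convex spaces. Then the set A⋆B = A + ((0,1)×A×B) + B carries a convex space structure extending those of A and B, in which r(ι₁(a), ι₂(b)) = r·a + r*·b and whose most involved case is r((s,a,b),(t,a',b')) = (rs + r*t, (rs/(rs+r*t))_A(a,a'), (r·s*/(rs+r*t)*)_B(b,b')); and A⋆B, with the coprojections ι₁ : A → A⋆B and ι₂ : B → A⋆B, is the coproduct of A and B in the category of convex spaces: for any convex space C and convex maps f : A → C, g : B → C there is a unique convex map ⟨f,g⟩ : A⋆B → C with ⟨f,g⟩∘ι₁ = f and ⟨f,g⟩∘ι₂ = g, given on the middle summand by ⟨f,g⟩(r·a + r*·b) = r_C(f(a), g(b)). -/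

import Mathlib

/-- The open unit interval `(0,1) ⊂ ℝ`. -/
def UI : Type := {r : ℝ // 0 < r ∧ r < 1}

namespace UI

/-- `r* = 1 - r`. -/
def star (r : UI) : UI :=
  ⟨1 - r.1, by obtain ⟨r, h0, h1⟩ := r; constructor <;> nlinarith⟩

/-- `rs`. -/
def mul (r s : UI) : UI :=
  ⟨r.1 * s.1, by obtain ⟨r, h0, h1⟩ := r; obtain ⟨s, k0, k1⟩ := s; constructor <;> nlinarith⟩

/-- `r·s*/(rs)* = r(1-s)/(1-rs)`. -/
noncomputable def tri (r s : UI) : UI :=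
  ⟨r.1 * (1 - s.1) / (1 - r.1 * s.1), by
    obtain ⟨r, h0, h1⟩ := r; obtain ⟨s, k0, k1⟩ := s
    have h : (0:ℝ) < 1 - r * s := by nlinarith
    exact ⟨div_pos (by nlinarith) h, by rw [div_lt_one h]; nlinarith⟩⟩

/-- `rs + r*t`. -/
def wsum (r s t : UI) : UI :=
  ⟨r.1 * s.1 + (1 - r.1) * t.1, by
    obtain ⟨r, h0, h1⟩ := r; obtain ⟨s, k0, k1⟩ := s; obtain ⟨t, l0, l1⟩ := t
    constructor <;> nlinarith⟩

/-- `rs/(rs + r*t)`. -/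
noncomputable def frac1 (r s t : UI) : UI :=
  ⟨r.1 * s.1 / (r.1 * s.1 + (1 - r.1) * t.1), by
    obtain ⟨r, h0, h1⟩ := r; obtain ⟨s, k0, k1⟩ := s; obtain ⟨t, l0, l1⟩ := t
    have h : (0:ℝ) < r * s + (1 - r) * t := by nlinarith
    exact ⟨div_pos (by nlinarith) h, by rw [div_lt_one h]; nlinarith⟩⟩

/-- `r·s*/(rs + r*t)* = r(1-s)/(1 - (rs + (1-r)t))`. -/
noncomputable def frac2 (r s t : UI) : UI :=
  ⟨r.1 * (1 - s.1) / (1 - (r.1 * s.1 + (1 - r.1) * t.1)), by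
    obtain ⟨r, h0, h1⟩ := r; obtain ⟨s, k0, k1⟩ := s; obtain ⟨t, l0, l1⟩ := t
    have h : (0:ℝ) < 1 - (r * s + (1 - r) * t) := by nlinarith
    exact ⟨div_pos (by nlinarith) h, by rw [div_lt_one h]; nlinarith⟩⟩

end UI

/-- A convex space structure on `A`: an operation `(0,1) × A × A → A` satisfying
(i) `r(a,a) = a`, (ii) `r(a,b) = r*(b,a)`, (iii) `r(s(a,b),c) = (rs)(a, (r·s*/(rs)*)(b,c))`. -/
structure ConvStr (A : Type) where
  op : UI → A → A → A
  idem : ∀ r a, op r a a = a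
  comm : ∀ r a b, op r a b = op (UI.star r) b a
  assoc : ∀ r s a b c, op r (op s a b) c = op (UI.mul r s) a (op (UI.tri r s) b c)

/-- A convex map is a function preserving the convex-combination operations. -/
def IsConvexMap {A B : Type} (cA : ConvStr A) (cB : ConvStr B) (f : A → B) : Prop :=
  ∀ r a b, f (cA.op r a b) = cB.op r (f a) (f b)

/-- The underlying set `A ⋆ B = A + ((0,1) × A × B) + B`. -/
def CStar (A B : Type) : Type := A ⊕ ((UI × A × B) ⊕ B)

/-- Coprojection `ι₁ : A → A ⋆ B`. -/
def cinl {A B : Type} (a : A) : CStar A B := Sum.inl a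

/-- The middle-summand element `r·a + r*·b` of `A ⋆ B`. -/
def cmid {A B : Type} (r : UI) (a : A) (b : B) : CStar A B := Sum.inr (Sum.inl (r, a, b))

/-- Coprojection `ι₂ : B → A ⋆ B`. -/
def cinr {A B : Type} (b : B) : CStar A B := Sum.inr (Sum.inr b)

namespace CoprodAux

def PR : Type := {x : ℝ // 0 < x}

def pone : PR := ⟨1, one_pos⟩

noncomputable def ratio (w v : PR) : UI :=
  ⟨w.1 / (w.1 + v.1), by
    obtain ⟨w, hw⟩ := w; obtain ⟨v, hv⟩ := v
    have h : (0:ℝ) < w + v := by linarith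
    exact ⟨div_pos hw h, by rw [div_lt_one h]; linarith⟩⟩

def pmul (r : UI) (w : PR) : PR := ⟨r.1 * w.1, mul_pos r.2.1 w.2⟩
def padd (w v : PR) : PR := ⟨w.1 + v.1, add_pos w.2 v.2⟩

variable {A B C : Type}

noncomputable def wadd (c : ConvStr A) : Option (PR × A) → Option (PR × A) → Option (PR × A)
  | none, y => y
  | some x, none => some x
  | some (w, a), some (v, a') => some (padd w v, c.op (ratio w v) a a')

def wsc (r : UI) : Option (PR × A) → Option (PR × A) :=
  Option.map fun p => (pmul r p.1, p.2)

def Wgt : Option (PR × A) → ℝ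
  | none => 0
  | some (w, _) => w.1

lemma star_ratio (w v : PR) : UI.star (ratio w v) = ratio v w := by
  apply Subtype.ext
  show 1 - w.1 / (w.1 + v.1) = v.1 / (v.1 + w.1)
  have hw := w.2; have hv := v.2
  have h : w.1 + v.1 ≠ 0 := by positivity
  rw [add_comm v.1 w.1]
  field_simp
  ring

lemma wadd_comm (c : ConvStr A) (x y : Option (PR × A)) : wadd c x y = wadd c y x := by
  match x, y with
  | none, none => rfl
  | none, some y => rfl
  | some x, none => rfl
  | some (w, a), some (v, a') =>
    show some (padd w v, c.op (ratio w v) a a') = some (padd v w, c.op (ratio v w) a' a)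
    rw [c.comm, star_ratio]
    have h : padd w v = padd v w := Subtype.ext (add_comm _ _)
    rw [h]

lemma wadd_assoc (c : ConvStr A) (x y z : Option (PR × A)) :
    wadd c (wadd c x y) z = wadd c x (wadd c y z) := by
  match x, y, z with
  | none, y, z => rfl
  | some x, none, z => rfl
  | some x, some y, none => rfl
  | some (w, a), some (v, a'), some (u, a'') =>
    show some (padd (padd w v) u, c.op (ratio (padd w v) u) (c.op (ratio w v) a a') a'')
       = some (padd w (padd v u), c.op (ratio w (padd v u)) a (c.op (ratio v u) a' a''))
    rw [c.assoc]
    have hw := w.2; have hv := v.2; have hu := u.2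
    have h1 : (w.1 + v.1) ≠ 0 := by positivity
    have h2 : (w.1 + v.1 + u.1) ≠ 0 := by positivity
    have h3 : (v.1 + u.1) ≠ 0 := by positivity
    have e1 : UI.mul (ratio (padd w v) u) (ratio w v) = ratio w (padd v u) := by
      apply Subtype.ext
      show (w.1 + v.1) / (w.1 + v.1 + u.1) * (w.1 / (w.1 + v.1)) = w.1 / (w.1 + (v.1 + u.1))
      rw [show w.1 + (v.1 + u.1) = w.1 + v.1 + u.1 by ring]
      field_simp
    have e2 : UI.tri (ratio (padd w v) u) (ratio w v) = ratio v u := by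
      apply Subtype.ext
      show (w.1 + v.1) / (w.1 + v.1 + u.1) * (1 - w.1 / (w.1 + v.1)) /
          (1 - (w.1 + v.1) / (w.1 + v.1 + u.1) * (w.1 / (w.1 + v.1))) = v.1 / (v.1 + u.1)
      have k1 : (w.1 + v.1) / (w.1 + v.1 + u.1) * (1 - w.1 / (w.1 + v.1)) = v.1 / (w.1 + v.1 + u.1) := by
        field_simp; ring
      have k2 : (1 : ℝ) - (w.1 + v.1) / (w.1 + v.1 + u.1) * (w.1 / (w.1 + v.1)) = (v.1 + u.1) / (w.1 + v.1 + u.1) := by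
        field_simp; ring
      rw [k1, k2]; field_simp
    rw [e1, e2]
    have h : padd (padd w v) u = padd w (padd v u) := Subtype.ext (add_assoc _ _ _)
    rw [h]

lemma wsc_wadd (c : ConvStr A) (r : UI) (x y : Option (PR × A)) :
    wsc r (wadd c x y) = wadd c (wsc r x) (wsc r y) := by
  match x, y with
  | none, y => cases y <;> rfl
  | some x, none => rfl
  | some (w, a), some (v, a') =>
    show some (pmul r (padd w v), c.op (ratio w v) a a')
       = some (padd (pmul r w) (pmul r v), c.op (ratio (pmul r w) (pmul r v)) a a')
    have h1 : pmul r (padd w v) = padd (pmul r w) (pmul r v) := Subtype.ext (mul_add _ _ _)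
    have h2 : ratio (pmul r w) (pmul r v) = ratio w v := by
      apply Subtype.ext
      show r.1 * w.1 / (r.1 * w.1 + r.1 * v.1) = w.1 / (w.1 + v.1)
      rw [← mul_add, mul_div_mul_left _ _ (ne_of_gt r.2.1)]
    rw [h1, h2]

lemma wsc_wsc (r s : UI) (x : Option (PR × A)) : wsc r (wsc s x) = wsc (UI.mul r s) x := by
  cases x with
  | none => rfl
  | some p =>
    show some (pmul r (pmul s p.1), p.2) = some (pmul (UI.mul r s) p.1, p.2)
    have h : pmul r (pmul s p.1) = pmul (UI.mul r s) p.1 := Subtype.ext (mul_assoc _ _ _).symm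
    rw [h]

lemma wadd_sc_self (c : ConvStr A) (r : UI) (x : Option (PR × A)) :
    wadd c (wsc r x) (wsc (UI.star r) x) = x := by
  cases x with
  | none => rfl
  | some p =>
    obtain ⟨w, a⟩ := p
    show some (padd (pmul r w) (pmul (UI.star r) w), c.op _ a a) = some (w, a)
    rw [c.idem]
    have h : padd (pmul r w) (pmul (UI.star r) w) = w := by
      apply Subtype.ext
      show r.1 * w.1 + (1 - r.1) * w.1 = w.1
      ring
    rw [h]

lemma Wgt_wadd (c : ConvStr A) (x y : Option (PR × A)) : Wgt (wadd c x y) = Wgt x + Wgt y := by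
  match x, y with
  | none, y => show Wgt y = 0 + Wgt y; ring
  | some x, none => show Wgt (some x) = Wgt (some x) + 0; ring
  | some (w, a), some (v, a') => show w.1 + v.1 = w.1 + v.1; rfl

lemma Wgt_wsc (r : UI) (x : Option (PR × A)) : Wgt (wsc r x) = r.1 * Wgt x := by
  cases x with
  | none => show (0:ℝ) = r.1 * 0; ring
  | some p => rfl

lemma wadd_wadd_comm (c : ConvStr A) (x y z t : Option (PR × A)) :
    wadd c (wadd c x y) (wadd c z t) = wadd c (wadd c x z) (wadd c y t) := by
  rw [wadd_assoc, ← wadd_assoc c y z t, wadd_comm c y z, wadd_assoc c z y t, ← wadd_assoc]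

variable {A B C : Type}

noncomputable def pairop (cA : ConvStr A) (cB : ConvStr B) (r : UI)
    (p q : Option (PR × A) × Option (PR × B)) : Option (PR × A) × Option (PR × B) :=
  (wadd cA (wsc r p.1) (wsc (UI.star r) q.1), wadd cB (wsc r p.2) (wsc (UI.star r) q.2))

def uw (r : UI) : PR := ⟨r.1, r.2.1⟩
def uw' (r : UI) : PR := ⟨1 - r.1, by have := r.2.2; linarith⟩

def enc : CStar A B → Option (PR × A) × Option (PR × B)
  | Sum.inl a => (some (pone, a), none)
  | Sum.inr (Sum.inl (r, a, b)) => (some (uw r, a), some (uw' r, b))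
  | Sum.inr (Sum.inr b) => (none, some (pone, b))

noncomputable def dec (X₀ : CStar A B) : Option (PR × A) × Option (PR × B) → CStar A B
  | (some (_, a), none) => cinl a
  | (none, some (_, b)) => cinr b
  | (some (w, a), some (v, b)) => cmid (ratio w v) a b
  | (none, none) => X₀

def Tw (p : Option (PR × A) × Option (PR × B)) : ℝ := Wgt p.1 + Wgt p.2

lemma tw_enc (X : CStar A B) : Tw (enc X) = 1 := by
  match X with
  | Sum.inl a => show (1:ℝ) + 0 = 1; ring
  | Sum.inr (Sum.inl (r, a, b)) => show r.1 + (1 - r.1) = 1; ring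
  | Sum.inr (Sum.inr b) => show (0:ℝ) + 1 = 1; ring

lemma tw_pairop (cA : ConvStr A) (cB : ConvStr B) (r : UI) (p q) :
    Tw (pairop cA cB r p q) = r.1 * Tw p + (1 - r.1) * Tw q := by
  show Wgt (wadd cA (wsc r p.1) (wsc (UI.star r) q.1)) + Wgt (wadd cB (wsc r p.2) (wsc (UI.star r) q.2)) = _
  rw [Wgt_wadd, Wgt_wadd, Wgt_wsc, Wgt_wsc, Wgt_wsc, Wgt_wsc]
  show r.1 * Wgt p.1 + (1 - r.1) * Wgt q.1 + (r.1 * Wgt p.2 + (1 - r.1) * Wgt q.2)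
      = r.1 * (Wgt p.1 + Wgt p.2) + (1 - r.1) * (Wgt q.1 + Wgt q.2)
  ring

lemma ratio_uw (r : UI) : ratio (uw r) (uw' r) = r := by
  apply Subtype.ext
  show r.1 / (r.1 + (1 - r.1)) = r.1
  rw [show r.1 + (1 - r.1) = 1 by ring, div_one]

lemma dec_enc (X₀ X : CStar A B) : dec X₀ (enc X) = X := by
  match X with
  | Sum.inl a => rfl
  | Sum.inr (Sum.inl (r, a, b)) =>
    show cmid (ratio (uw r) (uw' r)) a b = Sum.inr (Sum.inl (r, a, b))
    rw [ratio_uw]; rfl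
  | Sum.inr (Sum.inr b) => rfl

lemma enc_dec (X₀ : CStar A B) (p) (h : Tw p = 1) : enc (dec X₀ p) = p := by
  match p with
  | (none, none) => exfalso; have : (0:ℝ) + 0 = 1 := h; norm_num at this
  | (some (w, a), none) =>
    have hw : w.1 = 1 := by have : w.1 + 0 = 1 := h; linarith
    show (some (pone, a), none) = (some (w, a), none)
    rw [show pone = w from Subtype.ext hw.symm]
  | (none, some (v, b)) =>
    have hv : v.1 = 1 := by have : (0:ℝ) + v.1 = 1 := h; linarith
    show (none, some (pone, b)) = (none, some (v, b))
    rw [show pone = v from Subtype.ext hv.symm]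
  | (some (w, a), some (v, b)) =>
    have hwv : w.1 + v.1 = 1 := h
    show (some (uw (ratio w v), a), some (uw' (ratio w v), b)) = (some (w, a), some (v, b))
    have e1 : uw (ratio w v) = w := by
      apply Subtype.ext; show w.1 / (w.1 + v.1) = w.1; rw [hwv, div_one]
    have e2 : uw' (ratio w v) = v := by
      apply Subtype.ext; show 1 - w.1 / (w.1 + v.1) = v.1; rw [hwv, div_one]; linarith
    rw [e1, e2]

lemma dec_indep (X₀ X₁ : CStar A B) (p) (h : Tw p = 1) : dec X₀ p = dec X₁ p := by
  match p with
  | (none, none) => exfalso; have : (0:ℝ) + 0 = 1 := h; norm_num at this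
  | (some (w, a), none) => rfl
  | (none, some (v, b)) => rfl
  | (some (w, a), some (v, b)) => rfl

lemma pairop_self (cA : ConvStr A) (cB : ConvStr B) (r : UI) (p) :
    pairop cA cB r p p = p := by
  show (wadd cA (wsc r p.1) (wsc (UI.star r) p.1), wadd cB (wsc r p.2) (wsc (UI.star r) p.2)) = p
  rw [wadd_sc_self, wadd_sc_self]

lemma star_star (r : UI) : UI.star (UI.star r) = r := by
  apply Subtype.ext; show 1 - (1 - r.1) = r.1; ring

lemma pairop_comm (cA : ConvStr A) (cB : ConvStr B) (r : UI) (p q) :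
    pairop cA cB r p q = pairop cA cB (UI.star r) q p := by
  show (wadd cA (wsc r p.1) (wsc (UI.star r) q.1), wadd cB (wsc r p.2) (wsc (UI.star r) q.2))
     = (wadd cA (wsc (UI.star r) q.1) (wsc (UI.star (UI.star r)) p.1),
        wadd cB (wsc (UI.star r) q.2) (wsc (UI.star (UI.star r)) p.2))
  rw [star_star, wadd_comm cA, wadd_comm cB]

lemma wadd_pairop_assoc (c : ConvStr A) (r s : UI) (x y z : Option (PR × A)) :
    wadd c (wsc r (wadd c (wsc s x) (wsc (UI.star s) y))) (wsc (UI.star r) z)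
      = wadd c (wsc (UI.mul r s) x)
          (wsc (UI.star (UI.mul r s)) (wadd c (wsc (UI.tri r s) y) (wsc (UI.star (UI.tri r s)) z))) := by
  have hr0 := r.2.1; have hr1 := r.2.2; have hs0 := s.2.1; have hs1 := s.2.2
  have hne : (1:ℝ) - r.1 * s.1 ≠ 0 := by nlinarith
  have e1 : UI.mul r (UI.star s) = UI.mul (UI.star (UI.mul r s)) (UI.tri r s) := by
    apply Subtype.ext
    show r.1 * (1 - s.1) = (1 - r.1 * s.1) * (r.1 * (1 - s.1) / (1 - r.1 * s.1))
    field_simp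
  have e2 : UI.star r = UI.mul (UI.star (UI.mul r s)) (UI.star (UI.tri r s)) := by
    apply Subtype.ext
    show 1 - r.1 = (1 - r.1 * s.1) * (1 - r.1 * (1 - s.1) / (1 - r.1 * s.1))
    field_simp; ring
  rw [wsc_wadd, wsc_wsc, wsc_wsc, wsc_wadd, wsc_wsc, wsc_wsc, wadd_assoc, ← e1, ← e2]

lemma pairop_assoc (cA : ConvStr A) (cB : ConvStr B) (r s : UI) (p q o) :
    pairop cA cB r (pairop cA cB s p q) o
      = pairop cA cB (UI.mul r s) p (pairop cA cB (UI.tri r s) q o) := by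
  show (wadd cA (wsc r (wadd cA (wsc s p.1) (wsc (UI.star s) q.1))) (wsc (UI.star r) o.1),
        wadd cB (wsc r (wadd cB (wsc s p.2) (wsc (UI.star s) q.2))) (wsc (UI.star r) o.2))
     = (wadd cA (wsc (UI.mul r s) p.1)
          (wsc (UI.star (UI.mul r s)) (wadd cA (wsc (UI.tri r s) q.1) (wsc (UI.star (UI.tri r s)) o.1))),
        wadd cB (wsc (UI.mul r s) p.2)
          (wsc (UI.star (UI.mul r s)) (wadd cB (wsc (UI.tri r s) q.2) (wsc (UI.star (UI.tri r s)) o.2))))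
  rw [wadd_pairop_assoc, wadd_pairop_assoc]

noncomputable def cop (cA : ConvStr A) (cB : ConvStr B) (r : UI) (X Y : CStar A B) : CStar A B :=
  dec X (pairop cA cB r (enc X) (enc Y))

lemma tw_pairop_enc (cA : ConvStr A) (cB : ConvStr B) (r : UI) (X Y : CStar A B) :
    Tw (pairop cA cB r (enc X) (enc Y)) = 1 := by
  rw [tw_pairop, tw_enc, tw_enc]; ring

noncomputable def coprodStr (cA : ConvStr A) (cB : ConvStr B) : ConvStr (CStar A B) where
  op := cop cA cB
  idem := fun r X => by
    show dec X (pairop cA cB r (enc X) (enc X)) = X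
    rw [pairop_self, dec_enc]
  comm := fun r X Y => by
    show dec X (pairop cA cB r (enc X) (enc Y)) = dec Y (pairop cA cB (UI.star r) (enc Y) (enc X))
    rw [pairop_comm]
    exact dec_indep _ _ _ (tw_pairop_enc _ _ _ _ _)
  assoc := fun r s X Y Z => by
    show dec (cop cA cB s X Y) (pairop cA cB r (enc (cop cA cB s X Y)) (enc Z))
       = dec X (pairop cA cB (UI.mul r s) (enc X) (enc (cop cA cB (UI.tri r s) Y Z)))
    rw [show enc (cop cA cB s X Y) = pairop cA cB s (enc X) (enc Y) from
          enc_dec _ _ (tw_pairop_enc _ _ _ _ _),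
        show enc (cop cA cB (UI.tri r s) Y Z) = pairop cA cB (UI.tri r s) (enc Y) (enc Z) from
          enc_dec _ _ (tw_pairop_enc _ _ _ _ _),
        pairop_assoc]
    exact dec_indep _ _ _ (by rw [tw_pairop, tw_pairop_enc, tw_enc]; ring)


lemma ratio_one (r : UI) : ratio (pmul r pone) (pmul (UI.star r) pone) = r := by
  apply Subtype.ext
  show r.1 * 1 / (r.1 * 1 + (1 - r.1) * 1) = r.1
  rw [show r.1 * 1 + (1 - r.1) * 1 = 1 by ring, div_one, mul_one]

lemma cop_inl_inl (cA : ConvStr A) (cB : ConvStr B) (r : UI) (a a' : A) :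
    cop cA cB r (cinl a) (cinl a') = (cinl (cA.op r a a') : CStar A B) := by
  show cinl (cA.op (ratio (pmul r pone) (pmul (UI.star r) pone)) a a') = cinl (cA.op r a a')
  rw [ratio_one]

lemma cop_inr_inr (cA : ConvStr A) (cB : ConvStr B) (r : UI) (b b' : B) :
    cop cA cB r (cinr b) (cinr b') = (cinr (cB.op r b b') : CStar A B) := by
  show cinr (cB.op (ratio (pmul r pone) (pmul (UI.star r) pone)) b b') = cinr (cB.op r b b')
  rw [ratio_one]

lemma cop_inl_inr (cA : ConvStr A) (cB : ConvStr B) (r : UI) (a : A) (b : B) :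
    cop cA cB r (cinl a) (cinr b) = cmid r a b := by
  show cmid (ratio (pmul r pone) (pmul (UI.star r) pone)) a b = cmid r a b
  rw [ratio_one]

lemma cop_mid_mid (cA : ConvStr A) (cB : ConvStr B) (r s t : UI) (a a' : A) (b b' : B) :
    cop cA cB r (cmid s a b) (cmid t a' b')
      = cmid (UI.wsum r s t) (cA.op (UI.frac1 r s t) a a') (cB.op (UI.frac2 r s t) b b') := by
  show cmid (ratio (padd (pmul r (uw s)) (pmul (UI.star r) (uw t)))
              (padd (pmul r (uw' s)) (pmul (UI.star r) (uw' t))))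
        (cA.op (ratio (pmul r (uw s)) (pmul (UI.star r) (uw t))) a a')
        (cB.op (ratio (pmul r (uw' s)) (pmul (UI.star r) (uw' t))) b b')
     = cmid (UI.wsum r s t) (cA.op (UI.frac1 r s t) a a') (cB.op (UI.frac2 r s t) b b')
  have e1 : ratio (padd (pmul r (uw s)) (pmul (UI.star r) (uw t)))
              (padd (pmul r (uw' s)) (pmul (UI.star r) (uw' t))) = UI.wsum r s t := by
    apply Subtype.ext
    show (r.1 * s.1 + (1 - r.1) * t.1) /
        (r.1 * s.1 + (1 - r.1) * t.1 + (r.1 * (1 - s.1) + (1 - r.1) * (1 - t.1)))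
      = r.1 * s.1 + (1 - r.1) * t.1
    rw [show r.1 * s.1 + (1 - r.1) * t.1 + (r.1 * (1 - s.1) + (1 - r.1) * (1 - t.1)) = 1 by ring,
        div_one]
  have e2 : ratio (pmul r (uw s)) (pmul (UI.star r) (uw t)) = UI.frac1 r s t := by
    apply Subtype.ext
    show r.1 * s.1 / (r.1 * s.1 + (1 - r.1) * t.1) = r.1 * s.1 / (r.1 * s.1 + (1 - r.1) * t.1)
    rfl
  have e3 : ratio (pmul r (uw' s)) (pmul (UI.star r) (uw' t)) = UI.frac2 r s t := by
    apply Subtype.ext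
    show r.1 * (1 - s.1) / (r.1 * (1 - s.1) + (1 - r.1) * (1 - t.1))
       = r.1 * (1 - s.1) / (1 - (r.1 * s.1 + (1 - r.1) * t.1))
    rw [show r.1 * (1 - s.1) + (1 - r.1) * (1 - t.1) = 1 - (r.1 * s.1 + (1 - r.1) * t.1) by ring]
  rw [e1, e2, e3]

/-! universal property -/

def hmap (cC : ConvStr C) (f : A → C) (g : B → C) : CStar A B → C
  | Sum.inl a => f a
  | Sum.inr (Sum.inl (r, a, b)) => cC.op r (f a) (g b)
  | Sum.inr (Sum.inr b) => g b

def wmap (f : A → C) : Option (PR × A) → Option (PR × C) :=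
  Option.map fun p => (p.1, f p.2)

lemma wmap_wadd {cA : ConvStr A} {cC : ConvStr C} {f : A → C} (hf : IsConvexMap cA cC f)
    (x y : Option (PR × A)) : wmap f (wadd cA x y) = wadd cC (wmap f x) (wmap f y) := by
  match x, y with
  | none, y => cases y <;> rfl
  | some x, none => rfl
  | some (w, a), some (v, a') =>
    show some (padd w v, f (cA.op (ratio w v) a a'))
       = some (padd w v, cC.op (ratio w v) (f a) (f a'))
    rw [hf]

lemma wmap_wsc (f : A → C) (r : UI) (x : Option (PR × A)) :
    wmap f (wsc r x) = wsc r (wmap f x) := by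
  cases x <;> rfl

noncomputable def hp (cC : ConvStr C) (f : A → C) (g : B → C)
    (p : Option (PR × A) × Option (PR × B)) : Option (PR × C) :=
  wadd cC (wmap f p.1) (wmap g p.2)

lemma hp_enc (cC : ConvStr C) (f : A → C) (g : B → C) (X : CStar A B) :
    hp cC f g (enc X) = some (pone, hmap cC f g X) := by
  match X with
  | Sum.inl a => rfl
  | Sum.inr (Sum.inr b) => rfl
  | Sum.inr (Sum.inl (r, a, b)) =>
    show some (padd (uw r) (uw' r), cC.op (ratio (uw r) (uw' r)) (f a) (g b))
       = some (pone, cC.op r (f a) (g b))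
    rw [ratio_uw, show padd (uw r) (uw' r) = pone from Subtype.ext (by show r.1 + (1 - r.1) = 1; ring)]

lemma hp_dec (cC : ConvStr C) (f : A → C) (g : B → C) (X₀ : CStar A B) (p) (h : Tw p = 1) :
    hp cC f g p = some (pone, hmap cC f g (dec X₀ p)) := by
  match p with
  | (none, none) => exfalso; have : (0:ℝ) + 0 = 1 := h; norm_num at this
  | (some (w, a), none) =>
    have hw : w.1 = 1 := by have : w.1 + 0 = 1 := h; linarith
    show some (w, f a) = some (pone, f a)
    rw [show w = pone from Subtype.ext hw]
  | (none, some (v, b)) =>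
    have hv : v.1 = 1 := by have : (0:ℝ) + v.1 = 1 := h; linarith
    show some (v, g b) = some (pone, g b)
    rw [show v = pone from Subtype.ext hv]
  | (some (w, a), some (v, b)) =>
    have hwv : w.1 + v.1 = 1 := h
    show some (padd w v, cC.op (ratio w v) (f a) (g b))
       = some (pone, cC.op (ratio w v) (f a) (g b))
    rw [show padd w v = pone from Subtype.ext hwv]

lemma hp_pairop {cA : ConvStr A} {cB : ConvStr B} {cC : ConvStr C} {f : A → C} {g : B → C}
    (hf : IsConvexMap cA cC f) (hg : IsConvexMap cB cC g) (r : UI) (p q) :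
    hp cC f g (pairop cA cB r p q)
      = wadd cC (wsc r (hp cC f g p)) (wsc (UI.star r) (hp cC f g q)) := by
  show wadd cC (wmap f (wadd cA (wsc r p.1) (wsc (UI.star r) q.1)))
        (wmap g (wadd cB (wsc r p.2) (wsc (UI.star r) q.2)))
     = wadd cC (wsc r (wadd cC (wmap f p.1) (wmap g p.2)))
        (wsc (UI.star r) (wadd cC (wmap f q.1) (wmap g q.2)))
  rw [wmap_wadd hf, wmap_wadd hg, wmap_wsc, wmap_wsc, wmap_wsc, wmap_wsc,
      wadd_wadd_comm, wsc_wadd, wsc_wadd]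

lemma hmap_convex {cA : ConvStr A} {cB : ConvStr B} {cC : ConvStr C} {f : A → C} {g : B → C}
    (hf : IsConvexMap cA cC f) (hg : IsConvexMap cB cC g) :
    IsConvexMap (coprodStr cA cB) cC (hmap cC f g) := by
  intro r X Y
  have e1 : hp cC f g (pairop cA cB r (enc X) (enc Y))
      = some (pone, hmap cC f g (cop cA cB r X Y)) :=
    hp_dec cC f g X _ (tw_pairop_enc cA cB r X Y)
  have e2 : hp cC f g (pairop cA cB r (enc X) (enc Y))
      = some (padd (pmul r pone) (pmul (UI.star r) pone),
          cC.op (ratio (pmul r pone) (pmul (UI.star r) pone)) (hmap cC f g X) (hmap cC f g Y)) := by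
    rw [hp_pairop hf hg, hp_enc, hp_enc]; rfl
  rw [ratio_one] at e2
  have e3 := e1.symm.trans e2
  simp only [Option.some.injEq, Prod.mk.injEq] at e3
  exact e3.2

end CoprodAux
/-- For convex spaces `A`, `B`, the set `A ⋆ B = A + ((0,1)×A×B) + B` carries a convex
structure extending those of `A` and `B`, with `r(ι₁a, ι₂b) = r·a + r*·b` and with
`r((s,a,b),(t,a',b')) = (rs+r*t, (rs/(rs+r*t))(a,a'), (r·s*/(rs+r*t)*)(b,b'))`; with the
coprojections `ι₁, ι₂` it is the coproduct of `A` and `B` in the category of convex spaces,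
with `⟨f,g⟩(r·a + r*·b) = r(f(a), g(b))`. -/
theorem convex_coproduct {A B : Type} (cA : ConvStr A) (cB : ConvStr B) :
    ∃ c : ConvStr (CStar A B),
      (∀ r a a', c.op r (cinl a) (cinl a') = cinl (cA.op r a a')) ∧
      (∀ r b b', c.op r (cinr b) (cinr b') = cinr (cB.op r b b')) ∧
      (∀ r a b, c.op r (cinl a) (cinr b) = cmid r a b) ∧
      (∀ r s t a b a' b',
        c.op r (cmid s a b) (cmid t a' b') =
          cmid (UI.wsum r s t) (cA.op (UI.frac1 r s t) a a') (cB.op (UI.frac2 r s t) b b')) ∧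
      (∀ (C : Type) (cC : ConvStr C) (f : A → C) (g : B → C),
        IsConvexMap cA cC f → IsConvexMap cB cC g →
        ∃! h : CStar A B → C,
          IsConvexMap c cC h ∧ (∀ a, h (cinl a) = f a) ∧ (∀ b, h (cinr b) = g b) ∧
            ∀ r a b, h (cmid r a b) = cC.op r (f a) (g b)) := by
  refine ⟨CoprodAux.coprodStr cA cB,
    CoprodAux.cop_inl_inl cA cB, CoprodAux.cop_inr_inr cA cB, CoprodAux.cop_inl_inr cA cB,
    fun r s t a b a' b' => CoprodAux.cop_mid_mid cA cB r s t a a' b b', ?_⟩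
  intro C cC f g hf hg
  refine ⟨CoprodAux.hmap cC f g,
    ⟨CoprodAux.hmap_convex hf hg, fun a => rfl, fun b => rfl, fun r a b => rfl⟩, ?_⟩
  rintro h' ⟨-, h1, h2, h3⟩
  funext X
  match X with
  | Sum.inl a => exact h1 a
  | Sum.inr (Sum.inl (r, a, b)) => exact h3 r a b
  | Sum.inr (Sum.inr b) => exact h2 b
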